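/- (Purification with the conjugate Hamiltonian yields the Wigner–Yanase skew information.) Let ρ be a d×d density matrix with spectral decomposition ρ = Σ_j p_j |φ_j⟩⟨φ_j| ({φ_j} an orthonormal basis), and let H_S be an Hermitian d×d matrix. Define the Hermitian matrix H_A by ⟨φ_a|H_A|φ_b⟩ = −⟨φ_b|H_S|φ_a⟩ (i.e. H_A is minus the transpose of H_S in the eigenbasis of ρ), the unit vector Φ = Σ_j √p_j φ_j ⊗ φ_j ∈ ℂ^d ⊗ ℂ^d, and H_tot = H_S ⊗ I + I ⊗ H_A. Then ⟨Φ|H_tot|Φ⟩ = 0 and ⟨Φ|H_tot²|Φ⟩ − ⟨Φ|H_tot|Φ⟩² = 2·W_{H_S}(ρ), where W_H(ρ) = −(1/2)·Tr([H, √ρ]²) = Tr(ρ H²) − Tr(√ρ H √ρ H) is the Wigner–Yanase skew information. Consequently, 2·W_{H_S}(ρ) ≥ F_{H_S}(ρ)/4. -/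

import Mathlib

open Matrix Complex Filter Kronecker
open scoped ComplexOrder

noncomputable section

/-- n-fold Kronecker power of a matrix, indexed by functions `Fin n → Fin d`. -/
def kronPow {d : ℕ} (X : Matrix (Fin d) (Fin d) ℂ) (n : ℕ) :
    Matrix (Fin n → Fin d) (Fin n → Fin d) ℂ :=
  Matrix.of fun i j => ∏ k, X (i k) (j k)

/-- The `n`-copy (non-interacting) Hamiltonian `Σᵢ I^{⊗(i-1)} ⊗ H ⊗ I^{⊗(n-i)}`. -/
def nCopyHam {d : ℕ} (H : Matrix (Fin d) (Fin d) ℂ) (n : ℕ) :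
    Matrix (Fin n → Fin d) (Fin n → Fin d) ℂ :=
  ∑ k : Fin n, Matrix.of fun i j =>
    H (i k) (j k) * ∏ l ∈ Finset.univ.erase k, (if i l = j l then (1 : ℂ) else 0)

/-- Time evolution unitary `e^{-iHt}`. -/
def timeEvol {m : Type*} [Fintype m] [DecidableEq m] (H : Matrix m m ℂ) (t : ℝ) :
    Matrix m m ℂ :=
  NormedSpace.exp ((-(Complex.I * (t : ℂ))) • H)

/-- Trace norm `‖A‖₁ = Tr √(AᴴA)`. -/
def traceNorm {m : Type*} [Fintype m] [DecidableEq m] (A : Matrix m m ℂ) : ℝ :=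
  (((Matrix.posSemidef_conjTranspose_mul_self A).1.eigenvectorUnitary.1 *
      diagonal (((↑) : ℝ → ℂ) ∘ (Real.sqrt ∘ (Matrix.posSemidef_conjTranspose_mul_self A).1.eigenvalues)) *
      (star (Matrix.posSemidef_conjTranspose_mul_self A).1.eigenvectorUnitary :
        Matrix m m ℂ)).trace).re

/-- A quantum channel: a map admitting a Kraus representation. -/
def IsQuantumChannel {m n : Type*} [Fintype m] [DecidableEq m] [Fintype n] [DecidableEq n]
    (E : Matrix m m ℂ → Matrix n n ℂ) : Prop :=
  ∃ (K : ℕ) (A : Fin K → Matrix n m ℂ),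
    (∀ X, E X = ∑ k, A k * X * (A k)ᴴ) ∧ (∑ k, (A k)ᴴ * A k = 1)

/-- Time-translation invariance of a map w.r.t. input/output Hamiltonians. -/
def IsTI {m n : Type*} [Fintype m] [DecidableEq m] [Fintype n] [DecidableEq n]
    (Hin : Matrix m m ℂ) (Hout : Matrix n n ℂ)
    (E : Matrix m m ℂ → Matrix n n ℂ) : Prop :=
  ∀ (t : ℝ) (X : Matrix m m ℂ),
    timeEvol Hout t * E X * timeEvol Hout (-t) =
      E (timeEvol Hin t * X * timeEvol Hin (-t))

/-- Energy variance of a (unit) vector. -/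
def varVec {m : Type*} [Fintype m] (H : Matrix m m ℂ) (ψ : m → ℂ) : ℝ :=
  (star ψ ⬝ᵥ ((H * H) *ᵥ ψ)).re - ((star ψ ⬝ᵥ (H *ᵥ ψ)).re) ^ 2

/-- The quantum Fisher information formula for a given spectral decomposition data. -/
def qfiOf {m : Type*} [Fintype m] (H : Matrix m m ℂ) (p : m → ℝ) (φ : m → m → ℂ) : ℝ :=
  2 * ∑ j, ∑ k,
    if 0 < p j + p k then
      (p j - p k) ^ 2 / (p j + p k) * Complex.normSq (star (φ j) ⬝ᵥ (H *ᵥ φ k))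
    else 0

/-- Quantum Fisher information of a Hermitian (e.g. density) matrix `ρ` w.r.t. `H`. -/
def QFI {m : Type*} [Fintype m] [DecidableEq m] {ρ : Matrix m m ℂ}
    (hρ : ρ.IsHermitian) (H : Matrix m m ℂ) : ℝ :=
  qfiOf H hρ.eigenvalues (fun j i => hρ.eigenvectorBasis j i)

open scoped Classical in
/-- Total positive-semidefinite square root (zero on non-PSD inputs). -/
def msqrt {m : Type*} [Fintype m] [DecidableEq m] (A : Matrix m m ℂ) : Matrix m m ℂ :=
  if h : A.PosSemidef then
    h.1.eigenvectorUnitary.1 * diagonal (((↑) : ℝ → ℂ) ∘ (Real.sqrt ∘ h.1.eigenvalues)) *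
      (star h.1.eigenvectorUnitary : Matrix m m ℂ)
  else 0

/-- Fidelity `Fid(ρ,σ) = (Tr √(√ρ σ √ρ))² = ‖√σ √ρ‖₁²`. -/
def fid {m : Type*} [Fintype m] [DecidableEq m] (ρ σ : Matrix m m ℂ) : ℝ :=
  (traceNorm (msqrt σ * msqrt ρ)) ^ 2

/-- Density matrix. -/
def IsDensityMatrix {m : Type*} [Fintype m] (ρ : Matrix m m ℂ) : Prop :=
  ρ.PosSemidef ∧ ρ.trace = 1


/-!
Everything is computed in the eigenbasis of `ρ`. Let `V` be the unitary whose columns are the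
`φ j`, `S = diag (√p j)` and `Ĥ = Vᴴ H_S V`. Then `√ρ = V S Vᴴ`, the purification is
`Φ = vec (V S Vᵀ)`, and the defining relation of `H_A` says `Vᴴ H_A V = -Ĥᵀ`. Since
`⟨vec M, (A ⊗ B) vec M⟩ = Tr (Mᴴ B M Aᵀ)`, the first moment of `H_tot` in `Φ` is
`Tr (S² Ĥᵀ) - Tr (S Ĥᵀ S) = 0` and the second is `2 (Tr (S² Ĥ²) - Tr (S Ĥ S Ĥ)) = 2 W`.
In coordinates `2 W = ∑ j k, (√p j - √p k)² |Ĥ j k|²`, and the Fisher bound is the termwise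
inequality `(a² - b²)² / (a² + b²) ≤ 2 (a - b)²`.
-/

theorem conj_mul_conj_of_mul_eq_one {M : Type*} [Monoid M] {U V : M} (h : V * U = 1) (X Y : M) :
    U * X * V * (U * Y * V) = U * (X * Y) * V := by
  simp only [mul_assoc, ← mul_assoc V, h, one_mul]

section SkewInformation

variable {m R : Type*} [Fintype m]

/-- The Wigner–Yanase skew information `Tr (ρ H²) - Tr (√ρ H √ρ H)`, written in terms of
`K = √ρ`. -/
def skewInfoOfSqrt [Ring R] (K H : Matrix m m R) : R :=
  (K * K * (H * H)).trace - (K * H * K * H).trace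

variable [CommRing R]

theorem trace_commutator_mul_self (H K : Matrix m m R) :
    ((H * K - K * H) * (H * K - K * H)).trace = -2 * skewInfoOfSqrt K H := by
  have e1 : (H * (K * (H * K))).trace = (K * (H * (K * H))).trace := by
    rw [trace_mul_comm H]; simp only [Matrix.mul_assoc]
  have e2 : (K * (H * (H * K))).trace = (K * (K * (H * H))).trace := by
    rw [trace_mul_comm K (K * (H * H))]; simp only [Matrix.mul_assoc]
  have e3 : (H * (K * (K * H))).trace = (K * (K * (H * H))).trace := by
    rw [trace_mul_comm H]; simp only [Matrix.mul_assoc]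
  simp only [skewInfoOfSqrt, sub_mul, mul_sub, trace_sub, Matrix.mul_assoc, e1, e2, e3]
  ring

theorem skewInfoOfSqrt_conj [StarRing R] [DecidableEq m] {V : Matrix m m R} (hV : Vᴴ * V = 1)
    (S H : Matrix m m R) : skewInfoOfSqrt (V * S * Vᴴ) H = skewInfoOfSqrt S (Vᴴ * H * V) := by
  have hV' : V * Vᴴ = 1 := mul_eq_one_comm.mp hV
  have h1 : (V * S * Vᴴ * (V * S * Vᴴ) * (H * H)).trace =
      (S * S * (Vᴴ * H * V * (Vᴴ * H * V))).trace := by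
    rw [conj_mul_conj_of_mul_eq_one hV, conj_mul_conj_of_mul_eq_one hV', Matrix.mul_assoc V,
      Matrix.mul_assoc V, trace_mul_comm V]
    simp only [Matrix.mul_assoc]
  have h2 : (V * S * Vᴴ * H * (V * S * Vᴴ) * H).trace =
      (S * (Vᴴ * H * V) * S * (Vᴴ * H * V)).trace := by
    simp only [Matrix.mul_assoc]
    rw [trace_mul_comm V]
    simp only [Matrix.mul_assoc]
  rw [skewInfoOfSqrt, skewInfoOfSqrt, h1, h2]

end SkewInformation

section Purification

variable {m R : Type*} [Fintype m] [CommRing R] [StarRing R]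

theorem star_vec_dotProduct_kronecker_mulVec_vec_mul_transpose {V S : Matrix m m R}
    (hS : Sᴴ = S) (A B : Matrix m m R) :
    star (vec (V * S * Vᵀ)) ⬝ᵥ ((A ⊗ₖ B) *ᵥ vec (V * S * Vᵀ)) =
      (S * (Vᴴ * B * V) * S * (Vᴴ * A * V)ᵀ).trace := by
  rw [kronecker_mulVec_vec, star_vec_dotProduct_vec, conjTranspose_mul, conjTranspose_mul, hS,
    transpose_mul, transpose_mul, conjTranspose_transpose_eq_transpose_conjTranspose]
  simp only [Matrix.mul_assoc]
  rw [trace_mul_comm Vᴴᵀ]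
  simp only [Matrix.mul_assoc]

variable [DecidableEq m] {V S HS HA : Matrix m m R}

theorem star_vec_dotProduct_conj_hamiltonian_mulVec_vec (hV : Vᴴ * V = 1) (hS : Sᴴ = S)
    (hA : Vᴴ * HA * V = -(Vᴴ * HS * V)ᵀ) :
    star (vec (V * S * Vᵀ)) ⬝ᵥ ((HS ⊗ₖ 1 + 1 ⊗ₖ HA) *ᵥ vec (V * S * Vᵀ)) = 0 := by
  rw [add_mulVec, dotProduct_add, star_vec_dotProduct_kronecker_mulVec_vec_mul_transpose hS,
    star_vec_dotProduct_kronecker_mulVec_vec_mul_transpose hS, hA, Matrix.mul_one, hV]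
  simp only [Matrix.mul_one, transpose_one, Matrix.mul_neg, Matrix.neg_mul, trace_neg]
  rw [trace_mul_cycle S _ S, add_neg_cancel]

theorem star_vec_dotProduct_conj_hamiltonian_sq_mulVec_vec (hV : Vᴴ * V = 1) (hS : Sᴴ = S)
    (hSt : Sᵀ = S) (hA : Vᴴ * HA * V = -(Vᴴ * HS * V)ᵀ) :
    star (vec (V * S * Vᵀ)) ⬝ᵥ
        (((HS ⊗ₖ 1 + 1 ⊗ₖ HA) * (HS ⊗ₖ 1 + 1 ⊗ₖ HA)) *ᵥ vec (V * S * Vᵀ)) =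
      2 * skewInfoOfSqrt S (Vᴴ * HS * V) := by
  have hV' : V * Vᴴ = 1 := mul_eq_one_comm.mp hV
  simp only [add_mul, mul_add, ← mul_kronecker_mul, Matrix.one_mul, Matrix.mul_one, add_mulVec,
    dotProduct_add, star_vec_dotProduct_kronecker_mulVec_vec_mul_transpose hS]
  simp only [← conj_mul_conj_of_mul_eq_one hV', hA, Matrix.mul_one, hV]
  set Ĥ := Vᴴ * HS * V
  have t1 : (S * S * (Ĥ * Ĥ)ᵀ).trace = (S * S * (Ĥ * Ĥ)).trace := by
    rw [← trace_transpose, transpose_mul, transpose_transpose, transpose_mul, hSt, trace_mul_comm]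
  have t2 : (S * Ĥᵀ * S * Ĥᵀ).trace = (S * Ĥ * S * Ĥ).trace := by
    rw [← trace_transpose]
    simp only [transpose_mul, transpose_transpose, hSt, Matrix.mul_assoc]
    rw [trace_mul_comm]
    simp only [Matrix.mul_assoc]
  have t3 : (S * (Ĥᵀ * Ĥᵀ) * S).trace = (S * S * (Ĥ * Ĥ)).trace := by
    rw [trace_mul_cycle, ← trace_transpose]
    simp only [transpose_mul, transpose_transpose, hSt]
    exact trace_mul_comm _ _
  simp only [neg_mul_neg, Matrix.mul_neg, Matrix.neg_mul, trace_neg, transpose_one,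
    Matrix.mul_one, t1, t2, t3, skewInfoOfSqrt]
  ring

end Purification

section Diagonal

variable {m : Type*} [Fintype m] [DecidableEq m] {H : Matrix m m ℂ}

theorem trace_diagonal_mul_mul_diagonal_mul (hH : H.IsHermitian) (a b : m → ℝ) :
    (diagonal (fun j => (a j : ℂ)) * H * diagonal (fun j => (b j : ℂ)) * H).trace =
      ((∑ j, ∑ k, a j * b k * normSq (H j k) : ℝ) : ℂ) := by
  simp only [trace, diag, mul_apply (M := diagonal _ * H * diagonal _), mul_diagonal,
    diagonal_mul]
  push_cast
  refine Finset.sum_congr rfl fun j _ => Finset.sum_congr rfl fun k _ => ?_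
  rw [← hH.apply k j, Complex.star_def, ← Complex.mul_conj]
  ring

theorem two_mul_re_skewInfoOfSqrt_diagonal (hH : H.IsHermitian) (s : m → ℝ) :
    2 * (skewInfoOfSqrt (diagonal fun j => (s j : ℂ)) H).re =
      ∑ j, ∑ k, (s j - s k) ^ 2 * normSq (H j k) := by
  have hss : diagonal (fun j => (s j : ℂ)) * diagonal (fun j => (s j : ℂ)) * (H * H) =
      diagonal (fun j => ((s j * s j : ℝ) : ℂ)) * H *
        diagonal (fun _ => ((1 : ℝ) : ℂ)) * H := by
    simp [diagonal_mul_diagonal, Matrix.mul_assoc]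
  have hswap :
      ∑ j, ∑ k, s k * s k * normSq (H j k) = ∑ j, ∑ k, s j * s j * normSq (H j k) := by
    rw [Finset.sum_comm]
    refine Finset.sum_congr rfl fun j _ => Finset.sum_congr rfl fun k _ => ?_
    rw [← hH.apply j k, Complex.star_def, normSq_conj]
  have hexpand : ∑ j, ∑ k, (s j - s k) ^ 2 * normSq (H j k) =
      ∑ j, ∑ k, s j * s j * normSq (H j k) + ∑ j, ∑ k, s k * s k * normSq (H j k) -
        2 * ∑ j, ∑ k, s j * s k * normSq (H j k) := by
    simp only [Finset.mul_sum, ← Finset.sum_add_distrib, ← Finset.sum_sub_distrib]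
    exact Finset.sum_congr rfl fun _ _ => Finset.sum_congr rfl fun _ _ => by ring
  rw [skewInfoOfSqrt, hss, trace_diagonal_mul_mul_diagonal_mul hH,
    trace_diagonal_mul_mul_diagonal_mul hH, ← ofReal_sub, ofReal_re, hexpand, hswap]
  simp only [mul_one]
  ring

end Diagonal

section OrthonormalBasis

variable {m : Type*} [Fintype m] {φ : m → m → ℂ} {p : m → ℝ}
  {ρ sqrtρ HS HA : Matrix m m ℂ}

def purification (p : m → ℝ) (φ : m → m → ℂ) : m × m → ℂ :=
  fun q => ∑ j, ((√(p j) : ℝ) : ℂ) * φ j q.1 * φ j q.2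

theorem transpose_of_conjTranspose_mul_mul_apply (X : Matrix m m ℂ) (a b : m) :
    ((of φ)ᵀᴴ * X * (of φ)ᵀ) a b = star (φ a) ⬝ᵥ (X *ᵥ φ b) := by
  simp only [mul_apply, mulVec, dotProduct, conjTranspose_apply, transpose_apply, of_apply,
    Pi.star_apply, Finset.mul_sum, Finset.sum_mul]
  rw [Finset.sum_comm]
  exact Finset.sum_congr rfl fun _ _ => Finset.sum_congr rfl fun _ _ => by ring

theorem transpose_of_conjTranspose_mul_mul_eq_neg_transpose
    (hHA : ∀ a b, star (φ a) ⬝ᵥ (HA *ᵥ φ b) = -(star (φ b) ⬝ᵥ (HS *ᵥ φ a))) :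
    (of φ)ᵀᴴ * HA * (of φ)ᵀ = -((of φ)ᵀᴴ * HS * (of φ)ᵀ)ᵀ := by
  ext a b
  rw [Matrix.neg_apply, transpose_apply, transpose_of_conjTranspose_mul_mul_apply,
    transpose_of_conjTranspose_mul_mul_apply, hHA]

variable [DecidableEq m]

theorem transpose_of_conjTranspose_mul_self
    (horth : ∀ a b, star (φ a) ⬝ᵥ φ b = if a = b then (1 : ℂ) else 0) :
    (of φ)ᵀᴴ * (of φ)ᵀ = 1 := by
  ext a b
  simpa [mul_apply, one_apply, dotProduct] using horth a b

theorem sum_smul_vecMulVec_star_eq (c : m → ℂ) :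
    ∑ j, c j • vecMulVec (φ j) (star (φ j)) = (of φ)ᵀ * diagonal c * (of φ)ᵀᴴ := by
  ext i k
  simp only [Matrix.sum_apply, Matrix.smul_apply, vecMulVec_apply, Pi.star_apply, smul_eq_mul,
    mul_apply, transpose_apply, of_apply, diagonal_apply, mul_ite, mul_zero, Finset.sum_ite_eq',
    Finset.mem_univ, if_true, conjTranspose_apply]
  exact Finset.sum_congr rfl fun _ _ => by ring

theorem purification_eq_vec (p : m → ℝ) :
    purification p φ =
      vec ((of φ)ᵀ * diagonal (fun j => ((√(p j) : ℝ) : ℂ)) * (of φ)ᵀᵀ) := by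
  ext q
  simp only [purification, vec, transpose_transpose, mul_apply, transpose_apply, of_apply,
    diagonal_apply, mul_ite, mul_zero, Finset.sum_ite_eq', Finset.mem_univ, if_true]
  exact Finset.sum_congr rfl fun _ _ => by ring

theorem spectral_sqrt_mul_self (hp : ∀ j, 0 ≤ p j)
    (horth : ∀ a b, star (φ a) ⬝ᵥ φ b = if a = b then (1 : ℂ) else 0)
    (hsqrtρ : sqrtρ = ∑ j, ((√(p j) : ℝ) : ℂ) • vecMulVec (φ j) (star (φ j)))
    (hρ : ρ = ∑ j, ((p j : ℝ) : ℂ) • vecMulVec (φ j) (star (φ j))) :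
    sqrtρ * sqrtρ = ρ := by
  rw [hsqrtρ, hρ, sum_smul_vecMulVec_star_eq, sum_smul_vecMulVec_star_eq,
    conj_mul_conj_of_mul_eq_one (transpose_of_conjTranspose_mul_self horth), diagonal_mul_diagonal]
  simp only [← ofReal_mul, Real.mul_self_sqrt (hp _)]

theorem star_purification_dotProduct_mulVec_eq_zero
    (horth : ∀ a b, star (φ a) ⬝ᵥ φ b = if a = b then (1 : ℂ) else 0)
    (hHA : ∀ a b, star (φ a) ⬝ᵥ (HA *ᵥ φ b) = -(star (φ b) ⬝ᵥ (HS *ᵥ φ a))) :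
    star (purification p φ) ⬝ᵥ ((HS ⊗ₖ 1 + 1 ⊗ₖ HA) *ᵥ purification p φ) = 0 := by
  rw [purification_eq_vec]
  exact star_vec_dotProduct_conj_hamiltonian_mulVec_vec (transpose_of_conjTranspose_mul_self horth)
    (by simp [diagonal_conjTranspose]) (transpose_of_conjTranspose_mul_mul_eq_neg_transpose hHA)

theorem varVec_purification
    (horth : ∀ a b, star (φ a) ⬝ᵥ φ b = if a = b then (1 : ℂ) else 0)
    (hsqrtρ : sqrtρ = ∑ j, ((√(p j) : ℝ) : ℂ) • vecMulVec (φ j) (star (φ j)))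
    (hHA : ∀ a b, star (φ a) ⬝ᵥ (HA *ᵥ φ b) = -(star (φ b) ⬝ᵥ (HS *ᵥ φ a))) :
    varVec (HS ⊗ₖ 1 + 1 ⊗ₖ HA) (purification p φ) = 2 * (skewInfoOfSqrt sqrtρ HS).re := by
  have hV := transpose_of_conjTranspose_mul_self horth
  rw [varVec, star_purification_dotProduct_mulVec_eq_zero horth hHA, purification_eq_vec,
    star_vec_dotProduct_conj_hamiltonian_sq_mulVec_vec hV (by simp [diagonal_conjTranspose])
      (diagonal_transpose _) (transpose_of_conjTranspose_mul_mul_eq_neg_transpose hHA),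
    hsqrtρ, sum_smul_vecMulVec_star_eq, skewInfoOfSqrt_conj hV]
  simp

theorem two_mul_re_skewInfoOfSqrt_eq_sum
    (horth : ∀ a b, star (φ a) ⬝ᵥ φ b = if a = b then (1 : ℂ) else 0)
    (hsqrtρ : sqrtρ = ∑ j, ((√(p j) : ℝ) : ℂ) • vecMulVec (φ j) (star (φ j)))
    (hHS : HS.IsHermitian) :
    2 * (skewInfoOfSqrt sqrtρ HS).re =
      ∑ j, ∑ k, (√(p j) - √(p k)) ^ 2 * normSq (star (φ j) ⬝ᵥ (HS *ᵥ φ k)) := by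
  rw [hsqrtρ, sum_smul_vecMulVec_star_eq,
    skewInfoOfSqrt_conj (transpose_of_conjTranspose_mul_self horth),
    two_mul_re_skewInfoOfSqrt_diagonal (isHermitian_conjTranspose_mul_mul _ hHS)]
  simp only [transpose_of_conjTranspose_mul_mul_apply]

end OrthonormalBasis

theorem sq_sub_sq_sq_div_le (a b : ℝ) :
    (a ^ 2 - b ^ 2) ^ 2 / (a ^ 2 + b ^ 2) ≤ 2 * (a - b) ^ 2 := by
  rcases (add_nonneg (sq_nonneg a) (sq_nonneg b)).eq_or_lt with h | h
  · rw [← h, div_zero]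
    positivity
  · rw [div_le_iff₀ h]
    nlinarith [sq_nonneg ((a - b) ^ 2)]

theorem qfiOf_div_four_le {m : Type*} [Fintype m] (H : Matrix m m ℂ) {p : m → ℝ}
    (hp : ∀ j, 0 ≤ p j) (φ : m → m → ℂ) :
    qfiOf H p φ / 4 ≤
      ∑ j, ∑ k, (√(p j) - √(p k)) ^ 2 * normSq (star (φ j) ⬝ᵥ (H *ᵥ φ k)) := by
  have hterm : ∀ j k, (if 0 < p j + p k then
      (p j - p k) ^ 2 / (p j + p k) * normSq (star (φ j) ⬝ᵥ (H *ᵥ φ k)) else 0) ≤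
        2 * ((√(p j) - √(p k)) ^ 2 * normSq (star (φ j) ⬝ᵥ (H *ᵥ φ k))) := by
    intro j k
    split_ifs
    · have key := sq_sub_sq_sq_div_le √(p j) √(p k)
      rw [Real.sq_sqrt (hp j), Real.sq_sqrt (hp k)] at key
      have := mul_le_mul_of_nonneg_right key (normSq_nonneg (star (φ j) ⬝ᵥ (H *ᵥ φ k)))
      linarith
    · exact mul_nonneg zero_le_two (mul_nonneg (sq_nonneg _) (normSq_nonneg _))
  have hsum := Finset.sum_le_sum fun j (_ : j ∈ Finset.univ) =>
    Finset.sum_le_sum fun k (_ : k ∈ Finset.univ) => hterm j k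
  simp only [← Finset.mul_sum] at hsum
  rw [qfiOf]
  linarith

theorem conjugate_hamiltonian_skew_information_general
    {d : ℕ} (ρ HS HA : Matrix (Fin d) (Fin d) ℂ)
    (p : Fin d → ℝ) (φ : Fin d → Fin d → ℂ)
    (hp : ∀ j, 0 ≤ p j)
    (horth : ∀ a b, star (φ a) ⬝ᵥ φ b = if a = b then (1 : ℂ) else 0)
    (hρdef : ρ = ∑ j, ((p j : ℝ) : ℂ) • Matrix.vecMulVec (φ j) (star (φ j)))
    (hHS : HS.IsHermitian)
    (hHA : ∀ a b, star (φ a) ⬝ᵥ (HA *ᵥ φ b) = -(star (φ b) ⬝ᵥ (HS *ᵥ φ a))) :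
    ∀ sqrtρ : Matrix (Fin d) (Fin d) ℂ,
      sqrtρ = ∑ j, ((Real.sqrt (p j) : ℝ) : ℂ) • Matrix.vecMulVec (φ j) (star (φ j)) →
      ∀ W : ℝ, W = ((ρ * (HS * HS)).trace).re - ((sqrtρ * HS * sqrtρ * HS).trace).re →
      (star (fun q : Fin d × Fin d => ∑ j, ((Real.sqrt (p j) : ℝ) : ℂ) * φ j q.1 * φ j q.2) ⬝ᵥ
        ((HS ⊗ₖ (1 : Matrix (Fin d) (Fin d) ℂ) + (1 : Matrix (Fin d) (Fin d) ℂ) ⊗ₖ HA) *ᵥ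
          fun q : Fin d × Fin d => ∑ j, ((Real.sqrt (p j) : ℝ) : ℂ) * φ j q.1 * φ j q.2) = 0) ∧
      varVec (HS ⊗ₖ (1 : Matrix (Fin d) (Fin d) ℂ) + (1 : Matrix (Fin d) (Fin d) ℂ) ⊗ₖ HA)
          (fun q : Fin d × Fin d => ∑ j, ((Real.sqrt (p j) : ℝ) : ℂ) * φ j q.1 * φ j q.2) =
        2 * W ∧
      W = (-(1 / 2 : ℂ) * (((HS * sqrtρ - sqrtρ * HS) * (HS * sqrtρ - sqrtρ * HS)).trace)).re ∧
      qfiOf HS p φ / 4 ≤ 2 * W := by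
  intro sqrtρ hsqrtρ W hW
  have hW' : W = (skewInfoOfSqrt sqrtρ HS).re := by
    rw [hW, skewInfoOfSqrt, spectral_sqrt_mul_self hp horth hsqrtρ hρdef, sub_re]
  refine ⟨star_purification_dotProduct_mulVec_eq_zero horth hHA, ?_, ?_, ?_⟩
  · rw [hW']
    exact varVec_purification horth hsqrtρ hHA
  · rw [trace_commutator_mul_self, hW', ← mul_assoc]
    norm_num
  · rw [hW', two_mul_re_skewInfoOfSqrt_eq_sum horth hsqrtρ hHS]
    exact qfiOf_div_four_le HS hp φ

theorem conjugate_hamiltonian_skew_information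
    {d : ℕ} (ρ HS HA : Matrix (Fin d) (Fin d) ℂ)
    (p : Fin d → ℝ) (φ : Fin d → Fin d → ℂ)
    (hp : ∀ j, 0 ≤ p j) (hsum : ∑ j, p j = 1)
    (horth : ∀ a b, star (φ a) ⬝ᵥ φ b = if a = b then (1 : ℂ) else 0)
    (hρdef : ρ = ∑ j, ((p j : ℝ) : ℂ) • Matrix.vecMulVec (φ j) (star (φ j)))
    (hHS : HS.IsHermitian)
    (hHA : ∀ a b, star (φ a) ⬝ᵥ (HA *ᵥ φ b) = -(star (φ b) ⬝ᵥ (HS *ᵥ φ a))) :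
    ∀ sqrtρ : Matrix (Fin d) (Fin d) ℂ,
      sqrtρ = ∑ j, ((Real.sqrt (p j) : ℝ) : ℂ) • Matrix.vecMulVec (φ j) (star (φ j)) →
      ∀ W : ℝ, W = ((ρ * (HS * HS)).trace).re - ((sqrtρ * HS * sqrtρ * HS).trace).re →
      (star (fun q : Fin d × Fin d => ∑ j, ((Real.sqrt (p j) : ℝ) : ℂ) * φ j q.1 * φ j q.2) ⬝ᵥ
        ((HS ⊗ₖ (1 : Matrix (Fin d) (Fin d) ℂ) + (1 : Matrix (Fin d) (Fin d) ℂ) ⊗ₖ HA) *ᵥ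
          fun q : Fin d × Fin d => ∑ j, ((Real.sqrt (p j) : ℝ) : ℂ) * φ j q.1 * φ j q.2) = 0) ∧
      varVec (HS ⊗ₖ (1 : Matrix (Fin d) (Fin d) ℂ) + (1 : Matrix (Fin d) (Fin d) ℂ) ⊗ₖ HA)
          (fun q : Fin d × Fin d => ∑ j, ((Real.sqrt (p j) : ℝ) : ℂ) * φ j q.1 * φ j q.2) =
        2 * W ∧
      W = (-(1 / 2 : ℂ) * (((HS * sqrtρ - sqrtρ * HS) * (HS * sqrtρ - sqrtρ * HS)).trace)).re ∧
      qfiOf HS p φ / 4 ≤ 2 * W :=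
  conjugate_hamiltonian_skew_information_general ρ HS HA p φ hp horth hρdef hHS hHA

end
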